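/- arXiv:1106.4377 — 2 statements merged into one kernel-verified Lean document; each statement's English description precedes it below -/
import Mathlib

section
/- Let f ∈ UST. Then for all z, w ∈ 𝔻, Re((f'(w)/f'(z))^{1/2}) > 0, where ^{1/2} denotes the principal complex power. -/
open Complex Metric Set

noncomputable section

/-- The open unit disk in ℂ. -/
def unitDisk : Set ℂ := Metric.ball (0 : ℂ) 1

/-- `f` is normalized analytic on the unit disk: analytic there, `f 0 = 0`, `f' 0 = 1`. -/
def IsNormalized (f : ℂ → ℂ) : Prop :=
  DifferentiableOn ℂ f unitDisk ∧ f 0 = 0 ∧ deriv f 0 = 1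

/-- Uniformly starlike functions (two-variable characterization). -/
def IsUST (f : ℂ → ℂ) : Prop :=
  IsNormalized f ∧ Set.InjOn f unitDisk ∧
    ∀ z ∈ unitDisk, ∀ ζ ∈ unitDisk, z ≠ ζ →
      0 ≤ ((z - ζ) * deriv f z / (f z - f ζ)).re

/-- Uniformly convex functions (one-variable characterization). -/
def IsUCV (f : ℂ → ℂ) : Prop :=
  IsNormalized f ∧ Set.InjOn f unitDisk ∧
    ∀ z ∈ unitDisk,
      ‖z * deriv (deriv f) z / deriv f z‖
        < (1 + z * deriv (deriv f) z / deriv f z).re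

/-- Parabolic starlike functions. -/
def IsSP (f : ℂ → ℂ) : Prop :=
  IsNormalized f ∧
    ∀ z ∈ unitDisk, z ≠ 0 →
      ‖z * deriv f z / f z - 1‖ < (z * deriv f z / f z).re

/-- The `n`-th Taylor coefficient of `f` at the origin. -/
def taylorCoeff (f : ℂ → ℂ) (n : ℕ) : ℂ :=
  iteratedDeriv n f 0 / (n.factorial : ℂ)

/-!
Write `s = (f w - f z) / (w - z)` (the symmetric difference quotient, equal to `f' z` when
`w = z`). The UST condition says exactly that `f' z / s` and `f' w / s` have nonnegative real
part. For fixed `a`, the function `ζ ↦ f' ζ / dslope f a ζ` is analytic on the disk, takes the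
value `1` at `a` once `f' a ≠ 0`, and has nonnegative real part, so by the open mapping theorem
its real part is strictly positive; at `a = 0` this also gives `f' ≠ 0` everywhere. Hence
`f' w / f' z = (f' w / s) / (f' z / s)` is a quotient of two numbers in the right half-plane,
so it lies in the slit plane, where the principal square root has positive real part.
-/

lemma Complex.div_mem_slitPlane_of_re_pos {u v : ℂ} (hu : 0 < u.re) (hv : 0 < v.re) :
    v / u ∈ slitPlane := by
  rw [mem_slitPlane_iff_not_le_zero]
  intro hle
  have him : (v / u).im = 0 := (le_def.1 hle).2
  have hre : v.re = (v / u).re * u.re := by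
    conv_lhs => rw [← div_mul_cancel₀ v (ne_zero_of_re_pos hu)]
    rw [mul_re, him, zero_mul, sub_zero]
  have hre_nonpos : (v / u).re ≤ 0 := (le_def.1 hle).1
  linarith [mul_nonpos_of_nonpos_of_nonneg hre_nonpos hu.le]

lemma Complex.re_cpow_one_half_pos {x : ℂ} (hx : x ∈ slitPlane) :
    0 < (x ^ ((1 : ℂ) / 2)).re := by
  rw [one_div, cpow_inv_two_re, Real.sqrt_pos]
  rcases hx with hre | him
  · linarith [norm_nonneg x]
  · linarith [neg_abs_le x.re, abs_re_lt_norm.2 him]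

lemma AnalyticOnNhd.re_pos_of_re_nonneg {g : ℂ → ℂ} {U : Set ℂ} (hg : AnalyticOnNhd ℂ g U)
    (hUo : IsOpen U) (hU : IsPreconnected U) (hre : ∀ ζ ∈ U, 0 ≤ (g ζ).re) {a : ℂ}
    (ha : a ∈ U) (hga : 0 < (g a).re) {ζ : ℂ} (hζ : ζ ∈ U) : 0 < (g ζ).re := by
  rcases hg.is_constant_or_isOpen hU with ⟨c, hc⟩ | hopen
  · rwa [hc ζ hζ, ← hc a ha]
  · have himage : g '' U ⊆ interior {w : ℂ | 0 ≤ w.re} :=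
      interior_maximal (image_subset_iff.2 hre) (hopen U subset_rfl hUo)
    rw [interior_setOfPred_le_re] at himage
    exact himage (mem_image_of_mem g hζ)

lemma dslope_comm {𝕜 E : Type*} [NontriviallyNormedField 𝕜] [NormedAddCommGroup E]
    [NormedSpace 𝕜 E] (f : 𝕜 → E) (a b : 𝕜) : dslope f a b = dslope f b a := by
  rcases eq_or_ne a b with rfl | hab
  · rfl
  · rw [dslope_of_ne f hab.symm, dslope_of_ne f hab, slope_comm]

lemma dslope_ne_zero_of_injOn {𝕜 : Type*} [NontriviallyNormedField 𝕜] {f : 𝕜 → 𝕜}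
    {s : Set 𝕜} (hf : InjOn f s) {a b : 𝕜} (ha : a ∈ s) (hb : b ∈ s) (hfa : deriv f a ≠ 0) :
    dslope f a b ≠ 0 := by
  rcases eq_or_ne b a with rfl | hba
  · rwa [dslope_same]
  · rw [dslope_of_ne f hba, slope_def_field]
    exact div_ne_zero (sub_ne_zero.2 fun h => hba (hf hb ha h)) (sub_ne_zero.2 hba)

namespace IsUST

variable {f : ℂ → ℂ} (hf : IsUST f) {a ζ : ℂ}
include hf

lemma re_deriv_div_dslope_nonneg (ha : a ∈ unitDisk) (hζ : ζ ∈ unitDisk) :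
    0 ≤ (deriv f a / dslope f a ζ).re := by
  rcases eq_or_ne ζ a with rfl | hζa
  · rw [dslope_same]
    rcases eq_or_ne (deriv f ζ) 0 with h | h <;> simp [h]
  · have hquot : deriv f a / dslope f a ζ = (a - ζ) * deriv f a / (f a - f ζ) := by
      rw [dslope_of_ne f hζa, slope_def_field, div_div_eq_mul_div, ← neg_div_neg_eq]
      ring_nf
    rw [hquot]
    exact hf.2.2 a ha ζ hζ hζa.symm

lemma re_deriv_div_dslope_pos (ha : a ∈ unitDisk) (hfa : deriv f a ≠ 0)
    (hζ : ζ ∈ unitDisk) : 0 < (deriv f ζ / dslope f a ζ).re := by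
  have hdiff : DifferentiableOn ℂ f unitDisk := hf.1.1
  have hanalytic : AnalyticOnNhd ℂ (fun ξ => deriv f ξ / dslope f a ξ) unitDisk :=
    (hdiff.analyticOnNhd isOpen_ball).deriv.div
      (((differentiableOn_dslope (isOpen_ball.mem_nhds ha)).2 hdiff).analyticOnNhd isOpen_ball)
      fun ξ hξ => dslope_ne_zero_of_injOn hf.2.1 ha hξ hfa
  refine hanalytic.re_pos_of_re_nonneg isOpen_ball (convex_ball 0 1).isPreconnected
    (fun ξ hξ => ?_) ha (by simp [dslope_same, hfa]) hζ
  rw [dslope_comm]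
  exact hf.re_deriv_div_dslope_nonneg hξ ha

lemma deriv_ne_zero (hζ : ζ ∈ unitDisk) : deriv f ζ ≠ 0 := by
  have h0 : (0 : ℂ) ∈ unitDisk := mem_ball_self one_pos
  have hpos := hf.re_deriv_div_dslope_pos h0 (by rw [hf.1.2.2]; exact one_ne_zero) hζ
  intro h
  simp [h] at hpos

end IsUST

/-- for f ∈ UST, Re((f'(w)/f'(z))^(1/2)) > 0. -/
theorem ust_sqrt_deriv_quotient_positive (f : ℂ → ℂ) (hf : IsUST f)
    (z w : ℂ) (hz : z ∈ unitDisk) (hw : w ∈ unitDisk) :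
    0 < ((deriv f w / deriv f z) ^ ((1 : ℂ) / 2)).re := by
  have hs : dslope f z w ≠ 0 := dslope_ne_zero_of_injOn hf.2.1 hz hw (hf.deriv_ne_zero hz)
  have hpos_z : 0 < (deriv f z / dslope f z w).re := by
    rw [dslope_comm]
    exact hf.re_deriv_div_dslope_pos hw (hf.deriv_ne_zero hw) hz
  have hpos_w : 0 < (deriv f w / dslope f z w).re :=
    hf.re_deriv_div_dslope_pos hz (hf.deriv_ne_zero hz) hw
  rw [← div_div_div_cancel_right₀ hs]
  exact re_cpow_one_half_pos (div_mem_slitPlane_of_re_pos hpos_z hpos_w)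
end
end

section
/- Let A ∈ ℂ with |A| < 1 and let F(z) = z/(1 − Az). Then F ∈ UCV if and only if |A| ≤ 1/3. -/
open Complex Metric Set

noncomputable section

/-! With `w = A z` one has `z F''/F' = 2w/(1-w)`, and the defining inequality of UCV becomes
`2|w||1-w| < 1 - |w|²`. For `|w| < 1/3` it follows from `|1-w| ≤ 1+|w|`. If `|A| > 1/3`, pick
`1/3 < t < |A|`: the point `z = -t/A` lies in the disk and gives `w = -t`, where `|1-w| = 1+t`
and the inequality reduces to `t < 1/3`. -/

lemma mem_unitDisk {z : ℂ} : z ∈ unitDisk ↔ ‖z‖ < 1 := by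
  simp [unitDisk]

lemma one_sub_mul_ne_zero_of_mem_unitDisk {A z : ℂ} (hA : ‖A‖ ≤ 1) (hz : z ∈ unitDisk) :
    1 - A * z ≠ 0 := by
  have hAz : ‖A * z‖ < 1 := by
    rw [norm_mul]
    exact lt_of_le_of_lt (mul_le_of_le_one_left (norm_nonneg z) hA) (mem_unitDisk.mp hz)
  intro h
  rw [← eq_of_sub_eq_zero h, norm_one] at hAz
  exact lt_irrefl 1 hAz

lemma injOn_div_one_sub_mul (A : ℂ) :
    InjOn (fun z => z / (1 - A * z)) {z | 1 - A * z ≠ 0} := by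
  intro z₁ h₁ z₂ h₂ heq
  rw [div_eq_div_iff h₁ h₂] at heq
  linear_combination heq

section LinearFractional

variable {A z : ℂ}

lemma hasDerivAt_div_one_sub_mul (hz : 1 - A * z ≠ 0) :
    HasDerivAt (fun z => z / (1 - A * z)) ((1 - A * z) ^ 2)⁻¹ z := by
  have h := (hasDerivAt_id z).div (((hasDerivAt_id z).const_mul A).const_sub 1) hz
  refine h.congr_deriv ?_
  simp only [id]
  field_simp
  ring

lemma hasDerivAt_inv_one_sub_mul_sq (hz : 1 - A * z ≠ 0) :
    HasDerivAt (fun z => ((1 - A * z) ^ 2)⁻¹) (2 * A * ((1 - A * z) ^ 3)⁻¹) z := by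
  have h := ((((hasDerivAt_id z).const_mul A).const_sub 1).pow 2).inv (pow_ne_zero 2 hz)
  refine h.congr_deriv ?_
  simp only [id, Pi.pow_apply]
  field_simp
  ring

lemma deriv_deriv_div_one_sub_mul (hz : 1 - A * z ≠ 0) :
    deriv (deriv fun z => z / (1 - A * z)) z = 2 * A * ((1 - A * z) ^ 3)⁻¹ := by
  have hnhds : {z : ℂ | 1 - A * z ≠ 0} ∈ nhds z :=
    (isOpen_ne.preimage (by fun_prop)).mem_nhds hz
  have hderiv : deriv (fun z => z / (1 - A * z)) =ᶠ[nhds z] fun z => ((1 - A * z) ^ 2)⁻¹ :=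
    Filter.eventuallyEq_of_mem hnhds fun y hy => (hasDerivAt_div_one_sub_mul hy).deriv
  rw [hderiv.deriv_eq]
  exact (hasDerivAt_inv_one_sub_mul_sq hz).deriv

lemma mul_deriv_deriv_div_deriv_div_one_sub_mul (hz : 1 - A * z ≠ 0) :
    z * deriv (deriv fun z => z / (1 - A * z)) z / deriv (fun z => z / (1 - A * z)) z
      = 2 * (A * z) / (1 - A * z) := by
  rw [deriv_deriv_div_one_sub_mul hz, (hasDerivAt_div_one_sub_mul hz).deriv]
  field_simp

lemma isNormalized_div_one_sub_mul (hA : ‖A‖ ≤ 1) :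
    IsNormalized fun z => z / (1 - A * z) :=
  ⟨fun z hz => (hasDerivAt_div_one_sub_mul
      (one_sub_mul_ne_zero_of_mem_unitDisk hA hz)).differentiableAt.differentiableWithinAt,
    by simp, by simp [(hasDerivAt_div_one_sub_mul (A := A) (z := 0) (by simp)).deriv]⟩

end LinearFractional

lemma norm_lt_re_one_add_iff {w : ℂ} (hw : w ≠ 1) :
    ‖2 * w / (1 - w)‖ < (1 + 2 * w / (1 - w)).re ↔ 2 * ‖w‖ * ‖1 - w‖ < 1 - ‖w‖ ^ 2 := by
  have hd : (1 : ℂ) - w ≠ 0 := sub_ne_zero.mpr hw.symm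
  have hd0 : 0 < ‖1 - w‖ := norm_pos_iff.mpr hd
  have hre : (1 + 2 * w / (1 - w)).re = (1 - ‖w‖ ^ 2) / ‖1 - w‖ ^ 2 := by
    have : 1 + 2 * w / (1 - w) = (1 + w) / (1 - w) := by field_simp; ring
    rw [this, div_re, ← add_div, normSq_eq_norm_sq]
    congr 1
    rw [← normSq_eq_norm_sq, normSq_apply]
    simp only [add_re, sub_re, add_im, sub_im, one_re, one_im]
    ring
  have hnorm : ‖2 * w / (1 - w)‖ = 2 * ‖w‖ * ‖1 - w‖ / ‖1 - w‖ ^ 2 := by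
    rw [norm_div, norm_mul, Complex.norm_two]
    field_simp
  rw [hre, hnorm, div_lt_div_iff_of_pos_right (by positivity)]

lemma norm_lt_re_one_add_of_norm_lt {w : ℂ} (hw : ‖w‖ < 1 / 3) :
    ‖2 * w / (1 - w)‖ < (1 + 2 * w / (1 - w)).re := by
  have hw1 : w ≠ 1 := by rintro rfl; norm_num at hw
  rw [norm_lt_re_one_add_iff hw1]
  have hd : ‖1 - w‖ ≤ 1 + ‖w‖ := by simpa using norm_sub_le (1 : ℂ) w
  calc 2 * ‖w‖ * ‖1 - w‖ ≤ 2 * ‖w‖ * (1 + ‖w‖) := by gcongr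
    _ < (1 - ‖w‖) * (1 + ‖w‖) := by gcongr; linarith
    _ = 1 - ‖w‖ ^ 2 := by ring

lemma norm_lt_re_one_add_neg_ofReal_iff {t : ℝ} (ht : 0 ≤ t) :
    ‖2 * -(t : ℂ) / (1 - -t)‖ < (1 + 2 * -(t : ℂ) / (1 - -t)).re ↔ t < 1 / 3 := by
  have ht1 : -(t : ℂ) ≠ 1 := by
    rw [← ofReal_neg, ← ofReal_one, Ne, ofReal_inj]; linarith
  have hd : ‖1 - -(t : ℂ)‖ = 1 + t := by
    rw [sub_neg_eq_add, ← ofReal_one, ← ofReal_add, norm_real, Real.norm_of_nonneg (by linarith)]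
  rw [norm_lt_re_one_add_iff ht1, hd, norm_neg, norm_real, Real.norm_of_nonneg ht]
  constructor <;> intro h <;> nlinarith

theorem ucv_linear_fractional_iff_general (A : ℂ) :
    IsUCV (fun z => z / (1 - A * z)) ↔ ‖A‖ ≤ 1 / 3 := by
  constructor
  · rintro ⟨-, -, hcond⟩
    by_contra! hA
    obtain ⟨t, ht, htA⟩ := exists_between hA
    have hA0 : A ≠ 0 := norm_pos_iff.mp (by linarith)
    have hAz : A * (-t / A) = -t := mul_div_cancel₀ _ hA0
    have hz : -t / A ∈ unitDisk := by
      rw [mem_unitDisk, norm_div, norm_neg, norm_real, Real.norm_of_nonneg (by linarith),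
        div_lt_one (by linarith)]
      exact htA
    have hden : 1 - A * (-t / A) ≠ 0 := by
      rw [hAz, sub_neg_eq_add, ← ofReal_one, ← ofReal_add, ofReal_ne_zero]; linarith
    have h := hcond _ hz
    rw [mul_deriv_deriv_div_deriv_div_one_sub_mul hden, hAz,
      norm_lt_re_one_add_neg_ofReal_iff (by linarith)] at h
    linarith
  · intro hA
    have hA1 : ‖A‖ ≤ 1 := hA.trans (by norm_num)
    have hden := fun z (hz : z ∈ unitDisk) => one_sub_mul_ne_zero_of_mem_unitDisk hA1 hz
    refine ⟨isNormalized_div_one_sub_mul hA1, (injOn_div_one_sub_mul A).mono hden,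
      fun z hz => ?_⟩
    rw [mul_deriv_deriv_div_deriv_div_one_sub_mul (hden z hz)]
    apply norm_lt_re_one_add_of_norm_lt
    calc ‖A * z‖ = ‖A‖ * ‖z‖ := norm_mul A z
      _ < 1 / 3 := by
        nlinarith [mem_unitDisk.mp hz, norm_nonneg A, norm_nonneg z]

/-- z/(1 - Az) is uniformly convex iff |A| ≤ 1/3. -/
theorem ucv_linear_fractional_iff (A : ℂ) (hA : ‖A‖ < 1) :
    IsUCV (fun z => z / (1 - A * z)) ↔ ‖A‖ ≤ 1 / 3 :=
  ucv_linear_fractional_iff_general A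
end
end
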